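/- arXiv:1110.5164 — 4 statements merged into one kernel-verified Lean document; each statement's English description precedes it below -/
import Mathlib

section
/- Let p(ξ_n) = ξ_n² + 2iβ ξ_n + q₂ + 2iq₁ be a quadratic polynomial in ξ_n with β > 0, q₁, q₂ ∈ ℝ. Define μ = q₂ + q₁²/β². If μ < 0, then both complex roots of p have strictly negative imaginary part. -/
/-! Writing a root as `z = x + iy`, the imaginary part of the equation gives `q₁ = -x (y + β)`,
and substituting this into the real part yields `β² μ = y (y + 2β) (x² + β²)`.
So `μ < 0` forces `y (y + 2β) < 0`, i.e. `-2β < y < 0`. -/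

lemma re_im_of_quadratic_eq_zero {β q₁ q₂ : ℝ} {z : ℂ}
    (hz : z^2 + 2 * Complex.I * (β : ℂ) * z + (q₂ : ℂ) + 2 * Complex.I * (q₁ : ℂ) = 0) :
    z.re^2 - z.im^2 - 2 * β * z.im + q₂ = 0 ∧ z.re * z.im + β * z.re + q₁ = 0 := by
  have hre := congrArg Complex.re hz
  have him := congrArg Complex.im hz
  simp only [pow_two, Complex.add_re, Complex.add_im, Complex.mul_re, Complex.mul_im,
    Complex.I_re, Complex.I_im, Complex.ofReal_re, Complex.ofReal_im, Complex.zero_re,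
    Complex.zero_im, Complex.re_ofNat, Complex.im_ofNat] at hre him
  constructor <;> linarith

lemma mul_sq_add_sq_eq_of_quadratic_eq_zero {β q₁ q₂ : ℝ} {z : ℂ}
    (hz : z^2 + 2 * Complex.I * (β : ℂ) * z + (q₂ : ℂ) + 2 * Complex.I * (q₁ : ℂ) = 0) :
    q₂ * β^2 + q₁^2 = z.im * (z.im + 2 * β) * (z.re^2 + β^2) := by
  obtain ⟨hre, him⟩ := re_im_of_quadratic_eq_zero hz
  have hq₁ : q₁ = -(z.re * (z.im + β)) := by linarith
  subst hq₁
  linear_combination β^2 * hre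

lemma im_mem_Ioo_of_quadratic_eq_zero {β q₁ q₂ : ℝ} (hβ : 0 < β) (hμ : q₂ + q₁^2 / β^2 < 0)
    {z : ℂ}
    (hz : z^2 + 2 * Complex.I * (β : ℂ) * z + (q₂ : ℂ) + 2 * Complex.I * (q₁ : ℂ) = 0) :
    z.im ∈ Set.Ioo (-2 * β) 0 := by
  have hβ2 : 0 < β^2 := by positivity
  have hneg : q₂ * β^2 + q₁^2 < 0 := by
    have := mul_neg_of_neg_of_pos hμ hβ2
    rwa [add_mul, div_mul_cancel₀ _ hβ2.ne'] at this
  rw [mul_sq_add_sq_eq_of_quadratic_eq_zero hz] at hneg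
  have hprod : z.im * (z.im + 2 * β) < 0 :=
    neg_of_mul_neg_left hneg (by positivity)
  constructor <;> nlinarith

theorem stmt2 (β q₁ q₂ : ℝ) (hβ : 0 < β) (hμ : q₂ + q₁^2 / β^2 < 0) :
    ∀ z : ℂ,
      z^2 + 2 * Complex.I * (β : ℂ) * z + (q₂ : ℂ) + 2 * Complex.I * (q₁ : ℂ) = 0 →
      z.im < 0 :=
  fun _ hz => (im_mem_Ioo_of_quadratic_eq_zero hβ hμ hz).2
end

section
/- Let p(ξ_n) = ξ_n² + 2iβ ξ_n + q₂ + 2iq₁ with β > 0, q₁, q₂ ∈ ℝ, and μ = q₂ + q₁²/β². If μ > −β², then the two roots ρ₁, ρ₂ of p have distinct imaginary parts, and ordering them so that Im ρ₁ > Im ρ₂, one has Im ρ₁ > −β > Im ρ₂. -/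
/-!
If the roots had equal imaginary parts, `ρ₁ - ρ₂` would be real, so the discriminant
`(ρ₁ - ρ₂)^2 = (ρ₁ + ρ₂)^2 - 4 ρ₁ ρ₂ = -4 (β^2 + q₂) - 8 i q₁` would be a nonnegative real:
`q₁ = 0` and `q₂ ≤ -β^2`, i.e. `μ ≤ -β^2`. Once the imaginary parts differ, they lie on either
side of their mean `-β`.
-/

open Complex ComplexOrder

lemma Complex.sq_sub_nonneg_of_im_eq {z w : ℂ} (h : z.im = w.im) : 0 ≤ (z - w) ^ 2 := by
  have hreal : z - w = ((z - w).re : ℂ) := by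
    apply Complex.ext <;> simp [h]
  rw [hreal, ← ofReal_pow]
  exact zero_le_real.mpr (sq_nonneg _)

theorem stmt3_general (β q₁ q₂ : ℝ) (hμ : -β^2 < q₂ + q₁^2 / β^2)
    (ρ₁ ρ₂ : ℂ)
    (hsum : ρ₁ + ρ₂ = -2 * Complex.I * (β : ℂ))
    (hprod : ρ₁ * ρ₂ = (q₂ : ℂ) + 2 * Complex.I * (q₁ : ℂ)) :
    ρ₁.im ≠ ρ₂.im ∧ (ρ₂.im < ρ₁.im → -β < ρ₁.im ∧ ρ₂.im < -β) := by
  have him_sum : ρ₁.im + ρ₂.im = -(2 * β) := by simpa using congrArg im hsum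
  have hne : ρ₁.im ≠ ρ₂.im := by
    intro h
    have hdisc : (ρ₁ - ρ₂) ^ 2 = ((-4 * (β ^ 2 + q₂) : ℝ) : ℂ) - 8 * q₁ * I := by
      push_cast
      linear_combination (ρ₁ + ρ₂ - 2 * I * β) * hsum - 4 * hprod + 4 * β ^ 2 * I_sq
    have hnonneg := sq_sub_nonneg_of_im_eq h
    rw [hdisc, nonneg_iff] at hnonneg
    obtain ⟨hre, him⟩ := hnonneg
    simp only [sub_re, sub_im, mul_re, mul_im, ofReal_re, ofReal_im, I_re, I_im, re_ofNat,
      im_ofNat] at hre him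
    have hq₁ : q₁ = 0 := by linarith
    rw [hq₁] at hμ
    norm_num at hμ
    linarith
  exact ⟨hne, fun hlt => ⟨by linarith, by linarith⟩⟩

theorem stmt3 (β q₁ q₂ : ℝ) (hβ : 0 < β) (hμ : -β^2 < q₂ + q₁^2 / β^2)
    (ρ₁ ρ₂ : ℂ)
    (hsum : ρ₁ + ρ₂ = -2 * Complex.I * (β : ℂ))
    (hprod : ρ₁ * ρ₂ = (q₂ : ℂ) + 2 * Complex.I * (q₁ : ℂ)) :
    ρ₁.im ≠ ρ₂.im ∧ (ρ₂.im < ρ₁.im → -β < ρ₁.im ∧ ρ₂.im < -β) :=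
  stmt3_general β q₁ q₂ hμ ρ₁ ρ₂ hsum hprod
end

section
/- Let V ∈ ℝ^{n-1} with |V| ≤ ε ≤ 1/2, and define ρ(η') = √(|η'|² − |V|² + 2i η'·V) using the principal branch of the square root. Then for all η' with |η'| ≥ ε one has |η'| − ε ≤ Re ρ(η') ≤ |η'| + ε, and for all η' with |η'| ≥ 2ε one has |Im ρ(η')| ≤ 2ε. -/
/-!
Write `z = (r² - v²) + 2i⟪η, V⟫` with `r = ‖η‖`, `v = ‖V‖`. By Cauchy–Schwarz
`‖z‖² ≤ (r² - v²)² + 4r²v² = (r² + v²)²`, and the principal root has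
`Re √z = √((‖z‖ + Re z)/2)` and `|Im √z| = √((‖z‖ - Re z)/2)`. Hence
`√(r² - v²) ≤ Re √z ≤ r` and `|Im √z| ≤ v`.
-/

namespace Complex

variable {z : ℂ} {a b : ℝ}

lemma norm_le_sq_add_sq (hre : z.re = a ^ 2 - b ^ 2) (him : |z.im| ≤ 2 * a * b) :
    ‖z‖ ≤ a ^ 2 + b ^ 2 := by
  have him_sq : z.im ^ 2 ≤ (2 * a * b) ^ 2 := sq_le_sq' (abs_le.1 him).1 (abs_le.1 him).2
  refine (pow_le_pow_iff_left₀ (norm_nonneg z) (by positivity) two_ne_zero).1 ?_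
  rw [Complex.sq_norm, normSq_apply, hre]
  nlinarith

lemma re_cpow_inv_two_le (hre : z.re = a ^ 2 - b ^ 2) (hnorm : ‖z‖ ≤ a ^ 2 + b ^ 2)
    (ha : 0 ≤ a) : (z ^ (2⁻¹ : ℂ)).re ≤ a := by
  rw [cpow_inv_two_re, Real.sqrt_le_left ha]
  linarith

lemma abs_im_cpow_inv_two_le (hre : z.re = a ^ 2 - b ^ 2) (hnorm : ‖z‖ ≤ a ^ 2 + b ^ 2)
    (hb : 0 ≤ b) : |(z ^ (2⁻¹ : ℂ)).im| ≤ b := by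
  rw [abs_cpow_inv_two_im, Real.sqrt_le_left hb]
  linarith

lemma sub_le_re_cpow_inv_two {c : ℝ} (hre : z.re = a ^ 2 - b ^ 2) (hb : 0 ≤ b) (hbc : b ≤ c)
    (hca : c ≤ a) : a - c ≤ (z ^ (2⁻¹ : ℂ)).re := by
  rw [cpow_inv_two_re]
  refine (le_abs_self _).trans (Real.abs_le_sqrt ?_)
  nlinarith [re_le_norm z]

end Complex

open Complex in
theorem stmt5_general {m : ℕ} (ε : ℝ)
    (V : EuclideanSpace ℝ (Fin m)) (hV : ‖V‖ ≤ ε) :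
    ∀ η : EuclideanSpace ℝ (Fin m),
      (ε ≤ ‖η‖ →
        ‖η‖ - ε ≤ ((((‖η‖^2 - ‖V‖^2 : ℝ) : ℂ)
            + 2 * ((inner ℝ η V : ℝ) : ℂ) * Complex.I) ^ ((1:ℂ)/2)).re ∧
        ((((‖η‖^2 - ‖V‖^2 : ℝ) : ℂ)
            + 2 * ((inner ℝ η V : ℝ) : ℂ) * Complex.I) ^ ((1:ℂ)/2)).re ≤ ‖η‖ + ε) ∧
      (2 * ε ≤ ‖η‖ →
        |((((‖η‖^2 - ‖V‖^2 : ℝ) : ℂ)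
            + 2 * ((inner ℝ η V : ℝ) : ℂ) * Complex.I) ^ ((1:ℂ)/2)).im| ≤ 2 * ε) := by
  intro η
  set z : ℂ := ((‖η‖ ^ 2 - ‖V‖ ^ 2 : ℝ) : ℂ) + 2 * ((inner ℝ η V : ℝ) : ℂ) * I
  have hre : z.re = ‖η‖ ^ 2 - ‖V‖ ^ 2 := by simp [z, -ofReal_pow]
  have him : |z.im| ≤ 2 * ‖η‖ * ‖V‖ := by
    simpa [z, ← ofReal_pow, abs_mul, mul_assoc] using abs_real_inner_le_norm η V
  have hnorm := norm_le_sq_add_sq hre him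
  have hV₀ := norm_nonneg V
  rw [one_div]
  refine ⟨fun hη ↦ ⟨sub_le_re_cpow_inv_two hre hV₀ hV hη, ?_⟩, fun _ ↦ ?_⟩
  · linarith [re_cpow_inv_two_le hre hnorm (norm_nonneg η)]
  · linarith [abs_im_cpow_inv_two_le hre hnorm hV₀]

theorem stmt5 {m : ℕ} (ε : ℝ) (hε1 : 0 < ε) (hε2 : ε ≤ 1/2)
    (V : EuclideanSpace ℝ (Fin m)) (hV : ‖V‖ ≤ ε) :
    ∀ η : EuclideanSpace ℝ (Fin m),
      (ε ≤ ‖η‖ →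
        ‖η‖ - ε ≤ ((((‖η‖^2 - ‖V‖^2 : ℝ) : ℂ)
            + 2 * ((inner ℝ η V : ℝ) : ℂ) * Complex.I) ^ ((1:ℂ)/2)).re ∧
        ((((‖η‖^2 - ‖V‖^2 : ℝ) : ℂ)
            + 2 * ((inner ℝ η V : ℝ) : ℂ) * Complex.I) ^ ((1:ℂ)/2)).re ≤ ‖η‖ + ε) ∧
      (2 * ε ≤ ‖η‖ →
        |((((‖η‖^2 - ‖V‖^2 : ℝ) : ℂ)
            + 2 * ((inner ℝ η V : ℝ) : ℂ) * Complex.I) ^ ((1:ℂ)/2)).im| ≤ 2 * ε) :=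
  stmt5_general ε V hV
end

section
/- Let β > 0 and p(ξ_n) = ξ_n² + 2iβξ_n + q₂ + 2iq₁ with q₁, q₂ ∈ ℝ, μ = q₂ + q₁²/β² > −β², and let ρ₁, ρ₂ be the roots with Im ρ₁ > Im ρ₂. Suppose moreover q₂ ≥ c|ξ'|² − C and |q₁| ≤ C⟨ξ'⟩ for parameters ξ' with c, C > 0 fixed. Then there exist C₁ > 0 and δ > 0 such that |ξ'| ≥ C₁ implies Im ρ₁ ≥ δ|ξ'|. -/
/-!
Write `ρ₁ = a + ib`. Since `ρ₁ + ρ₂ = -2iβ`, the real part of `ρ₁ ρ₂ = q₂ + 2iq₁` gives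
`(b + β)² = q₂ + β² + a² ≥ c t² - C + β²`, and `Im ρ₁ > Im ρ₂ = -2β - b` gives `b + β > 0`.
For `u = √c t` large, `c t² - C + β² ≥ (u / 2 + β)²`, so `b ≥ u / 2`, i.e. `δ = √c / 2`.
-/

open Complex

lemma im_add_sq_eq_of_add_eq (β : ℝ) {ρ₁ ρ₂ : ℂ} (hsum : ρ₁ + ρ₂ = -2 * I * β) :
    (ρ₁.im + β) ^ 2 = (ρ₁ * ρ₂).re + β ^ 2 + ρ₁.re ^ 2 := by
  obtain rfl : ρ₂ = -2 * I * β - ρ₁ := eq_sub_of_add_eq' hsum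
  simp only [mul_re, sub_re, sub_im, mul_im, neg_re, neg_im, I_re, I_im, ofReal_re, ofReal_im,
    re_ofNat, im_ofNat]
  ring

lemma neg_lt_im_of_add_eq (β : ℝ) {ρ₁ ρ₂ : ℂ} (hsum : ρ₁ + ρ₂ = -2 * I * β)
    (him : ρ₂.im < ρ₁.im) : -β < ρ₁.im := by
  have := congrArg im hsum
  simp only [add_im, mul_im, neg_re, neg_im, I_re, I_im, ofReal_re, ofReal_im, re_ofNat,
    im_ofNat] at this
  linarith

lemma half_add_sq_le {β C u : ℝ} (hβ : 0 ≤ β) (hC : 0 ≤ C) (hu : 2 * β + 2 * √C ≤ u) :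
    (u / 2 + β) ^ 2 ≤ u ^ 2 - C + β ^ 2 := by
  have hC' : √C ^ 2 = C := Real.sq_sqrt hC
  nlinarith [Real.sqrt_nonneg C]

theorem stmt14 (β c C : ℝ) (hβ : 0 < β) (hc : 0 < c) (hC : 0 < C) :
    ∃ C₁ > 0, ∃ δ > 0, ∀ t : ℝ, C₁ ≤ t →
      ∀ q₁ q₂ : ℝ, ∀ ρ₁ ρ₂ : ℂ,
        c * t^2 - C ≤ q₂ → |q₁| ≤ C * Real.sqrt (1 + t^2) →
        -β^2 < q₂ + q₁^2 / β^2 →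
        ρ₁ + ρ₂ = -2 * Complex.I * (β : ℂ) →
        ρ₁ * ρ₂ = (q₂ : ℂ) + 2 * Complex.I * (q₁ : ℂ) →
        ρ₂.im < ρ₁.im →
        δ * t ≤ ρ₁.im := by
  have hsc : 0 < √c := Real.sqrt_pos.mpr hc
  refine ⟨(2 * β + 2 * √C) / √c, by positivity, √c / 2, by positivity, ?_⟩
  intro t ht q₁ q₂ ρ₁ ρ₂ hq₂ _ _ hsum hprod him
  have hu : 2 * β + 2 * √C ≤ √c * t := by rwa [div_le_iff₀' hsc] at ht
  have hsq : (√c * t) ^ 2 = c * t ^ 2 := by rw [mul_pow, Real.sq_sqrt hc.le]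
  have hre : (ρ₁ * ρ₂).re = q₂ := by simp [hprod]
  have hroot : (√c * t / 2 + β) ^ 2 ≤ (ρ₁.im + β) ^ 2 := by
    linarith [half_add_sq_le hβ.le hC.le hu, im_add_sq_eq_of_add_eq β hsum, sq_nonneg ρ₁.re]
  have hpos : 0 ≤ ρ₁.im + β := by linarith [neg_lt_im_of_add_eq β hsum him]
  have hb : √c * t / 2 + β ≤ ρ₁.im + β :=
    (pow_le_pow_iff_left₀ (by linarith [Real.sqrt_nonneg C]) hpos two_ne_zero).mp hroot
  linarith
end
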